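/- Let y¹, y² be step functions on [0,T] taking constant values y_{j,i} on intervals [t_{i−1}, t_i) of a common partition 0 = t₀ < … < t_n = T, and let Y^j_k = max_{1≤i≤k} y_{j,i} be the partial maxima. Then for any p ≥ 1, sup over partitions of Σ_k |(Y¹_{i_k} − Y¹_{i_{k−1}}) − (Y²_{i_k} − Y²_{i_{k−1}})|^p is bounded by sup over partitions of Σ_k |(y_{1,l_k} − y_{1,l_{k−1}}) − (y_{2,l_k} − y_{2,l_{k−1}})|^p, i.e. v_p(running max of y¹ − running max of y²) ≤ v_p(y¹ − y²). -/

import Mathlib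

open Set Filter Function MeasureTheory

noncomputable section

abbrev Eu (d : ℕ) := EuclideanSpace ℝ (Fin d)

def varSums {E : Type*} [NormedAddCommGroup E] (p : ℝ) (x : ℝ → E) (a b : ℝ) : Set ℝ :=
  {v | ∃ (n : ℕ) (t : Fin (n + 1) → ℝ), Monotone t ∧ t 0 = a ∧ t (Fin.last n) = b ∧
    v = ∑ i : Fin n, ‖x (t i.succ) - x (t i.castSucc)‖ ^ p}

/-- p-variation `v_p(x)_{[a,b]}` (supremum over partitions of `[a,b]`). -/
def vpvar {E : Type*} [NormedAddCommGroup E] (p : ℝ) (x : ℝ → E) (a b : ℝ) : ℝ :=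
  sSup (varSums p x a b)

/-- `x` has finite p-variation on `[a,b]`. -/
def HasFinVar {E : Type*} [NormedAddCommGroup E] (p : ℝ) (x : ℝ → E) (a b : ℝ) : Prop :=
  BddAbove (varSums p x a b)

/-- `V_p(x)_{[a,b]} = (v_p(x)_{[a,b]})^{1/p}`. -/
def Vp {E : Type*} [NormedAddCommGroup E] (p : ℝ) (x : ℝ → E) (a b : ℝ) : ℝ :=
  vpvar p x a b ^ (1 / p)

/-- p-variation norm `V̄_p(x)_{[a,b]} = V_p(x)_{[a,b]} + ‖x a‖`. -/
def VpNorm {E : Type*} [NormedAddCommGroup E] (p : ℝ) (x : ℝ → E) (a b : ℝ) : ℝ :=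
  Vp p x a b + ‖x a‖

/-- càdlàg : right-continuous with left limits. -/
def Cadlag {E : Type*} [NormedAddCommGroup E] (x : ℝ → E) : Prop :=
  (∀ t : ℝ, ContinuousWithinAt x (Ici t) t) ∧
  ∀ t : ℝ, ∃ c : E, Tendsto x (nhdsWithin t (Iio t)) (nhds c)
/-- running supremum of `y` on `[0,t]`. -/
def runSup (y : ℝ → ℝ) (t : ℝ) : ℝ := sSup (y '' Icc 0 t)

/-!
On each cell of the partition `y¹`, `y²` and their running suprema are constant, so both
variations are suprema of variation sums of finite sequences along monotone index lists: of
`X = a - b` on the right and of `D = max a - max b` (running maxima) on the left.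

Merging monotone runs of an index list only increases the sum, by superadditivity of `s ↦ s ^ p`,
so we may assume that `D` zigzags along it. Whenever `D` increases from `c` to `c'`, the running
max of `a` has increased, so it is attained at some `m ∈ (c, c']`, and there `X m ≥ D c'`;
symmetrically, when `D` decreases, some `m ∈ (c, c']` has `X m ≤ D c'`. Along a zigzag these
points `m` move monotonically, and each increment of `X` between them dominates the corresponding
increment of `D`.
-/

variable {α ι E F : Type*} [NormedAddCommGroup E] [NormedAddCommGroup F] {p : ℝ}

def listVarSum (p : ℝ) (f : α → E) : List α → ℝ
  | a :: b :: l => ‖f b - f a‖ ^ p + listVarSum p f (b :: l)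
  | _ => 0

@[simp] lemma listVarSum_nil (f : α → E) : listVarSum p f [] = 0 := rfl

@[simp] lemma listVarSum_singleton (f : α → E) (a : α) : listVarSum p f [a] = 0 := rfl

@[simp] lemma listVarSum_cons_cons (f : α → E) (a b : α) (l : List α) :
    listVarSum p f (a :: b :: l) = ‖f b - f a‖ ^ p + listVarSum p f (b :: l) := rfl

lemma listVarSum_map {β : Type*} (f : α → E) (g : β → α) :
    ∀ l : List β, listVarSum p f (l.map g) = listVarSum p (f ∘ g) l
  | [] | [_] => rfl
  | a :: b :: l => by
    rw [List.map_cons, List.map_cons, listVarSum_cons_cons, listVarSum_cons_cons, ← List.map_cons,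
      listVarSum_map f g (b :: l), comp_apply, comp_apply]

lemma listVarSum_congr {f g : α → E} :
    ∀ {l : List α}, (∀ a ∈ l, f a = g a) → listVarSum p f l = listVarSum p g l
  | [], _ | [_], _ => rfl
  | a :: b :: l, h => by
    rw [listVarSum_cons_cons, listVarSum_cons_cons, h a (by simp), h b (by simp),
      listVarSum_congr fun c hc => h c (List.mem_cons_of_mem a hc)]

lemma listVarSum_le_cons (f : α → E) (a : α) (l : List α) :
    listVarSum p f l ≤ listVarSum p f (a :: l) := by
  cases l with
  | nil => exact le_rfl
  | cons b l => exact le_add_of_nonneg_left (by positivity)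

lemma listVarSum_add_le_append (f : α → E) :
    ∀ l₁ l₂ : List α, listVarSum p f l₁ + listVarSum p f l₂ ≤ listVarSum p f (l₁ ++ l₂)
  | [], _ => by simp
  | [a], l₂ => by simpa using listVarSum_le_cons f a l₂
  | a :: b :: l, l₂ => by
    simpa [add_assoc] using listVarSum_add_le_append f (b :: l) l₂

lemma listVarSum_le_card_Ioi_mul [LinearOrder ι] [LocallyFiniteOrderTop ι] (hp : p ≠ 0)
    {f : ι → E} {M : ℝ} (hM : ∀ i j, ‖f j - f i‖ ^ p ≤ M) (c : ι) (l : List ι)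
    (hl : (c :: l).IsChain (· ≤ ·)) : listVarSum p f (c :: l) ≤ (Finset.Ioi c).card * M := by
  have hM0 : 0 ≤ M := by simpa [Real.zero_rpow hp] using hM c c
  induction l generalizing c with
  | nil => simpa using mul_nonneg (Nat.cast_nonneg _) hM0
  | cons c' l ih =>
    have ih' := ih c' hl.tail
    rw [listVarSum_cons_cons]
    rcases (List.isChain_cons_cons.1 hl).1.eq_or_lt with rfl | hlt
    · simpa [Real.zero_rpow hp] using ih'
    have hcard : (Finset.Ioi c').card + 1 ≤ (Finset.Ioi c).card :=
      Finset.card_lt_card (Finset.Ioi_ssubset_Ioi hlt)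
    calc ‖f c' - f c‖ ^ p + listVarSum p f (c' :: l)
        ≤ M + (Finset.Ioi c').card * M := add_le_add (hM c c') ih'
      _ = ((Finset.Ioi c').card + 1 : ℕ) * M := by push_cast; ring
      _ ≤ (Finset.Ioi c).card * M := by gcongr

lemma mul_nonpos_of_mul_nonneg_of_mul_neg {u v w : ℝ} (huv : 0 ≤ u * v) (hvw : v * w < 0) :
    u * w ≤ 0 := by
  rcases mul_neg_iff.1 hvw with ⟨hv, hw⟩ | ⟨hv, hw⟩
  · exact mul_nonpos_of_nonneg_of_nonpos (nonneg_of_mul_nonneg_left huv hv) hw.le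
  · exact mul_nonpos_of_nonpos_of_nonneg (nonpos_of_mul_nonneg_left huv hv) hw.le

lemma abs_rpow_add_abs_rpow_le (hp : 1 ≤ p) {u v : ℝ} (huv : 0 ≤ u * v) :
    |u| ^ p + |v| ^ p ≤ |u + v| ^ p := by
  rw [(abs_add_eq_add_abs_iff u v).2 (mul_nonneg_iff.1 huv)]
  exact Real.add_rpow_le_rpow_add (abs_nonneg u) (abs_nonneg v) hp

lemma abs_sub_le_abs_sub_of_mul_nonpos_of_mul_nonneg {z₁ z₂ d₁ d₂ : ℝ}
    (h₁ : (z₁ - d₁) * (d₂ - d₁) ≤ 0) (h₂ : 0 ≤ (z₂ - d₂) * (d₂ - d₁)) :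
    |d₂ - d₁| ≤ |z₂ - z₁| := by
  rcases lt_trichotomy (d₂ - d₁) 0 with h | h | h
  · have := nonneg_of_mul_nonpos_left h₁ h
    have := nonpos_of_mul_nonneg_left h₂ h
    rw [abs_of_neg h, ← abs_neg]
    exact le_abs.2 (Or.inl (by linarith))
  · simp [h]
  · have := nonpos_of_mul_nonpos_left h₁ h
    have := nonneg_of_mul_nonneg_left h₂ h
    rw [abs_of_pos h]
    exact le_abs.2 (Or.inl (by linarith))

def IsZigzag (f : α → ℝ) : List α → Prop
  | a :: b :: c :: l => (f b - f a) * (f c - f b) < 0 ∧ IsZigzag f (b :: c :: l)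
  | _ => True

lemma IsZigzag.tail {f : α → ℝ} : ∀ {l : List α}, IsZigzag f l → IsZigzag f l.tail
  | [], _ | [_], _ | [_, _], _ => trivial
  | _ :: _ :: _ :: _, h => h.2

theorem exists_sublist_isZigzag (hp : 1 ≤ p) (f : α → ℝ) :
    ∀ l : List α, ∃ l' : List α, l'.Sublist l ∧ l'.head? = l.head? ∧ IsZigzag f l' ∧
      listVarSum p f l ≤ listVarSum p f l'
  | [] => ⟨[], .slnil, rfl, trivial, le_rfl⟩
  | a :: l => by
    obtain ⟨l', hsub, hhead, hz, hle⟩ := exists_sublist_isZigzag hp f l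
    have hcons : listVarSum p f (a :: l) ≤ listVarSum p f (a :: l') := by
      rcases l with _ | ⟨b, l⟩
      · rw [List.head?_eq_none_iff.1 hhead]
      · obtain ⟨l'', rfl⟩ : ∃ l'', l' = b :: l'' := List.head?_eq_some_iff.1 hhead
        simpa using hle
    rcases l' with _ | ⟨b, _ | ⟨c, l''⟩⟩
    · exact ⟨[a], hsub.cons_cons a, rfl, trivial, hcons⟩
    · exact ⟨[a, b], hsub.cons_cons a, rfl, trivial, hcons⟩
    by_cases hturn : (f b - f a) * (f c - f b) < 0
    · exact ⟨a :: b :: c :: l'', hsub.cons_cons a, rfl, ⟨hturn, hz⟩, hcons⟩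
    -- a monotone run `a, b, c` is merged into the single step `a, c`
    rw [not_lt] at hturn
    refine ⟨a :: c :: l'', ((List.sublist_cons_self b _).trans hsub).cons_cons a, rfl, ?_, ?_⟩
    · rcases l'' with _ | ⟨d, l'''⟩
      · trivial
      refine ⟨?_, hz.2⟩
      have hfirst := mul_nonpos_of_mul_nonneg_of_mul_neg hturn hz.1
      have hsplit : (f c - f a) * (f d - f c) =
          (f b - f a) * (f d - f c) + (f c - f b) * (f d - f c) := by ring
      linarith [hz.1]
    · have hmerge := abs_rpow_add_abs_rpow_le hp hturn
      rw [sub_add_sub_cancel'] at hmerge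
      simp only [listVarSum_cons_cons, Real.norm_eq_abs] at hcons ⊢
      linarith

section RunningMax

variable [LinearOrder ι] [LocallyFiniteOrderBot ι]

lemma exists_lt_le_partialSups_eq {β : Type*} [LinearOrder β] {a : ι → β} {c c' : ι}
    (h : partialSups a c < partialSups a c') : ∃ m, c < m ∧ m ≤ c' ∧ a m = partialSups a c' := by
  obtain ⟨m, hm, hma⟩ := exists_partialSups_eq a c'
  refine ⟨m, lt_of_not_ge fun hmc => h.not_ge ?_, hm, hma.symm⟩
  exact hma ▸ le_partialSups_of_le a hmc

variable (a b : ι → ℝ)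

local notation:max "D" i:max => (partialSups a i - partialSups b i)
local notation:max "X" i:max => (a i - b i)

lemma exists_le_sub_mul_nonpos (c : ι) (s : ℝ) : ∃ e ≤ c, (X e - D c) * s ≤ 0 := by
  rcases le_total 0 s with hs | hs
  · obtain ⟨e, he, hbe⟩ := exists_partialSups_eq b c
    have := le_partialSups_of_le a he
    exact ⟨e, he, mul_nonpos_of_nonpos_of_nonneg (by linarith) hs⟩
  · obtain ⟨e, he, hae⟩ := exists_partialSups_eq a c
    have := le_partialSups_of_le b he
    exact ⟨e, he, mul_nonpos_of_nonneg_of_nonpos (by linarith) hs⟩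

lemma exists_between_sub_mul_nonneg {c c' : ι} (hcc' : c ≤ c') :
    ∃ m, c ≤ m ∧ m ≤ c' ∧ 0 ≤ (X m - D c') * (D c' - D c) := by
  have hA := (partialSups a).monotone hcc'
  have hB := (partialSups b).monotone hcc'
  rcases lt_trichotomy D c D c' with h | h | h
  · obtain ⟨m, hcm, hmc', hm⟩ :=
      exists_lt_le_partialSups_eq (a := a) (c := c) (c' := c') (by linarith)
    have := le_partialSups_of_le b hmc'
    exact ⟨m, hcm.le, hmc', mul_nonneg (by linarith) (by linarith)⟩
  · exact ⟨c', hcc', le_rfl, by rw [h, sub_self, mul_zero]⟩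
  · obtain ⟨m, hcm, hmc', hm⟩ :=
      exists_lt_le_partialSups_eq (a := b) (c := c) (c' := c') (by linarith)
    have := le_partialSups_of_le a hmc'
    exact ⟨m, hcm.le, hmc', mul_nonneg_of_nonpos_of_nonpos (by linarith) (by linarith)⟩

theorem exists_listVarSum_le_of_isZigzag (hp : 1 ≤ p) :
    ∀ (l : List ι) (c e : ι), (c :: l).IsChain (· ≤ ·) →
      IsZigzag (fun i => D i) (c :: l) → e ≤ c →
      (∀ c' ∈ l.head?, (X e - D c) * (D c' - D c) ≤ 0) →
      ∃ K : List ι, (e :: K).IsChain (· ≤ ·) ∧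
        listVarSum p (fun i => D i) (c :: l) ≤ listVarSum p (fun i => X i) (e :: K)
  | [], _, e, _, _, _, _ => ⟨[], .singleton e, le_rfl⟩
  | c' :: l, c, e, hl, hz, hec, hnear => by
    obtain ⟨m, hcm, hmc', hfar⟩ :=
      exists_between_sub_mul_nonneg a b (List.isChain_cons_cons.1 hl).1
    have hnear' : ∀ c'' ∈ l.head?, (X m - D c') * (D c'' - D c') ≤ 0 := by
      rintro c'' hc''
      obtain ⟨l', rfl⟩ := List.head?_eq_some_iff.1 hc''
      exact mul_nonpos_of_mul_nonneg_of_mul_neg hfar hz.1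
    obtain ⟨K, hK, hle⟩ := exists_listVarSum_le_of_isZigzag hp l c' m hl.tail hz.tail hmc' hnear'
    refine ⟨m :: K, List.isChain_cons_cons.2 ⟨hec.trans hcm, hK⟩, ?_⟩
    simp only [listVarSum_cons_cons, Real.norm_eq_abs] at hle ⊢
    refine add_le_add (Real.rpow_le_rpow (abs_nonneg _) ?_ (by linarith)) hle
    exact abs_sub_le_abs_sub_of_mul_nonpos_of_mul_nonneg (hnear c' rfl) hfar

theorem exists_listVarSum_partialSups_sub_le (hp : 1 ≤ p) {l : List ι}
    (hl : l.IsChain (· ≤ ·)) : ∃ K : List ι, K.IsChain (· ≤ ·) ∧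
      listVarSum p (fun i => D i) l ≤ listVarSum p (fun i => X i) K := by
  obtain ⟨l', hsub, -, hz, hle⟩ := exists_sublist_isZigzag hp (fun i => D i) l
  rcases l' with _ | ⟨c, _ | ⟨c', l'⟩⟩
  · exact ⟨[], .nil, hle⟩
  · exact ⟨[], .nil, hle⟩
  obtain ⟨e, hec, he⟩ := exists_le_sub_mul_nonpos a b c (D c' - D c)
  obtain ⟨K, hK, hK'⟩ := exists_listVarSum_le_of_isZigzag a b hp (c' :: l') c e
    (hl.sublist hsub) hz hec (by simpa using he)
  exact ⟨e :: K, hK, hle.trans hK'⟩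

end RunningMax

lemma listVarSum_ofFn (f : α → E) : ∀ {m : ℕ} (s : Fin (m + 1) → α),
    listVarSum p f (List.ofFn s) = ∑ i : Fin m, ‖f (s i.succ) - f (s i.castSucc)‖ ^ p
  | 0, _ => rfl
  | m + 1, s => by
    have ih := listVarSum_ofFn f (fun i => s i.succ)
    rw [List.ofFn_succ] at ih
    rw [List.ofFn_succ, List.ofFn_succ, listVarSum_cons_cons, ih, Fin.sum_univ_succ]
    rfl

section Partition

variable {x : ℝ → E} {a b c v : ℝ}

lemma exists_list_of_mem_varSums (hv : v ∈ varSums p x a b) :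
    ∃ l : List ℝ, l.IsChain (· ≤ ·) ∧ (∀ s ∈ l, s ∈ Icc a b) ∧ v = listVarSum p x l := by
  obtain ⟨m, s, hs, rfl, rfl, rfl⟩ := hv
  refine ⟨List.ofFn s, List.isChain_ofFn.2 fun i hi => hs (by simp [Fin.le_def]), ?_,
    (listVarSum_ofFn x s).symm⟩
  simp only [List.mem_ofFn]
  rintro _ ⟨i, rfl⟩
  exact ⟨hs (Fin.zero_le i), hs (Fin.le_last i)⟩

lemma zero_mem_varSums : (0 : ℝ) ∈ varSums p x a a :=
  ⟨0, fun _ => a, monotone_const, rfl, rfl, by simp⟩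

lemma norm_sub_rpow_add_mem_varSums (hac : a ≤ c) (hv : v ∈ varSums p x c b) :
    ‖x c - x a‖ ^ p + v ∈ varSums p x a b := by
  obtain ⟨m, s, hs, rfl, rfl, rfl⟩ := hv
  refine ⟨m + 1, Fin.cons a s, Fin.monotone_iff_le_succ.2 fun i => ?_, rfl, rfl, ?_⟩
  · refine Fin.cases hac (fun j => ?_) i
    simpa using hs (Fin.castSucc_le_succ j)
  · simp [Fin.sum_univ_succ]

lemma listVarSum_mem_varSums :
    ∀ {a : ℝ} {l : List ℝ}, (a :: l).IsChain (· ≤ ·) →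
      (a :: l).getLast (List.cons_ne_nil _ _) = b → listVarSum p x (a :: l) ∈ varSums p x a b
  | _, [], _, rfl => zero_mem_varSums
  | _, _ :: _, hl, hb =>
    norm_sub_rpow_add_mem_varSums (List.isChain_cons_cons.1 hl).1
      (listVarSum_mem_varSums hl.tail (by rwa [List.getLast_cons_cons] at hb))

lemma exists_le_mem_varSums (hab : a ≤ b) {l : List ℝ} (hl : l.IsChain (· ≤ ·))
    (hlab : ∀ s ∈ l, s ∈ Icc a b) : ∃ w ∈ varSums p x a b, listVarSum p x l ≤ w := by
  have hchain : (a :: (l ++ [b])).IsChain (· ≤ ·) := by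
    refine List.isChain_cons.2 ⟨fun s hs => ?_, hl.append (List.isChain_singleton b) ?_⟩
    · rcases l with _ | ⟨s', l⟩
      · obtain rfl : b = s := by simpa using hs
        exact hab
      · obtain rfl : s' = s := by simpa using hs
        exact (hlab s' List.mem_cons_self).1
    · intro s hs s' hs'
      obtain rfl : b = s' := by simpa using hs'
      exact (hlab s (List.mem_of_mem_getLast? hs)).2
  refine ⟨_, listVarSum_mem_varSums hchain (by simp), ?_⟩
  have h₁ := listVarSum_add_le_append x l [b] (p := p)
  have h₂ := listVarSum_add_le_append x [a] (l ++ [b]) (p := p)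
  simp only [listVarSum_singleton, add_zero, zero_add, List.singleton_append] at h₁ h₂
  exact h₁.trans h₂

theorem vpvar_le_vpvar_of_forall_exists {y : ℝ → F} (hab : a ≤ b)
    (hy : BddAbove (varSums p y a b))
    (h : ∀ l : List ℝ, l.IsChain (· ≤ ·) → (∀ s ∈ l, s ∈ Icc a b) →
      ∃ l' : List ℝ, l'.IsChain (· ≤ ·) ∧ (∀ s ∈ l', s ∈ Icc a b) ∧
        listVarSum p x l ≤ listVarSum p y l') :
    vpvar p x a b ≤ vpvar p y a b := by
  obtain ⟨v₀, hv₀, -⟩ := exists_le_mem_varSums (p := p) (x := x) hab List.isChain_nil (by simp)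
  refine csSup_le ⟨v₀, hv₀⟩ fun v hv => ?_
  obtain ⟨l, hl, hlab, rfl⟩ := exists_list_of_mem_varSums hv
  obtain ⟨l', hl', hl'ab, hle⟩ := h l hl hlab
  obtain ⟨w, hw, hlew⟩ := exists_le_mem_varSums (p := p) (x := y) hab hl' hl'ab
  exact le_csSup_of_le hy hw (hle.trans hlew)

theorem bddAbove_varSums_of_eqOn_comp [LinearOrder ι] [Fintype ι] [LocallyFiniteOrderTop ι]
    (hp : p ≠ 0) {φ : ℝ → ι} (hφ : Monotone φ) {g : ι → E} (hx : EqOn x (g ∘ φ) (Icc a b)) :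
    BddAbove (varSums p x a b) := by
  set M := ∑ ij : ι × ι, ‖g ij.2 - g ij.1‖ ^ p
  have hM : ∀ i j, ‖g j - g i‖ ^ p ≤ M := fun i j =>
    Finset.single_le_sum (f := fun ij : ι × ι => ‖g ij.2 - g ij.1‖ ^ p)
      (fun _ _ => by positivity) (Finset.mem_univ (i, j))
  have hM0 : 0 ≤ M := by positivity
  refine ⟨Fintype.card ι * M, fun v hv => ?_⟩
  obtain ⟨l, hl, hlab, rfl⟩ := exists_list_of_mem_varSums hv
  have hmap : (l.map φ).IsChain (· ≤ ·) := (List.isChain_map φ).2 (hl.imp fun _ _ h => hφ h)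
  rw [listVarSum_congr fun s hs => hx (hlab s hs), ← listVarSum_map]
  rcases hφl : l.map φ with _ | ⟨c, l'⟩
  · simpa using mul_nonneg (Nat.cast_nonneg _) hM0
  calc listVarSum p g (c :: l') ≤ (Finset.Ioi c).card * M :=
        listVarSum_le_card_Ioi_mul hp hM c l' (hφl ▸ hmap)
    _ ≤ Fintype.card ι * M := by gcongr; exact Finset.card_le_univ _

end Partition

section StepFunction

variable {n : ℕ} {t : Fin (n + 1) → ℝ} {y : ℝ → ℝ} {u : ℝ}

/-- The closed right end `t (Fin.last n)` forms a cell of its own, so a step function may take an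
extra value there. -/
def cellIndex (t : Fin (n + 1) → ℝ) (u : ℝ) : Fin (n + 1) :=
  (Finset.univ.filter fun i => t i ≤ u).sup id

lemma cellIndex_mono : Monotone (cellIndex t) := fun _ _ huv =>
  Finset.sup_mono fun i hi => by
    simp only [Finset.mem_filter, Finset.mem_univ, true_and] at hi ⊢
    exact hi.trans huv

lemma le_cellIndex {i : Fin (n + 1)} (h : t i ≤ u) : i ≤ cellIndex t u :=
  Finset.le_sup (f := id) (by simpa using h)

lemma apply_cellIndex_le (h : t 0 ≤ u) : t (cellIndex t u) ≤ u := by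
  obtain ⟨i, hi, heq⟩ :=
    (Finset.univ.filter fun i => t i ≤ u).exists_mem_eq_sup ⟨0, by simpa using h⟩ id
  rw [cellIndex, heq]
  simpa using hi

lemma eq_apply_cellIndex
    (hstep : ∀ i : Fin n, ∀ s ∈ Ico (t i.castSucc) (t i.succ), y s = y (t i.castSucc))
    (hu : u ∈ Icc (t 0) (t (Fin.last n))) : y u = y (t (cellIndex t u)) := by
  have hle := apply_cellIndex_le hu.1
  by_cases hlast : cellIndex t u = Fin.last n
  · rw [hlast] at hle ⊢
    rw [le_antisymm hu.2 hle]
  set i := (cellIndex t u).castPred hlast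
  have hi : i.castSucc = cellIndex t u := Fin.castSucc_castPred _ _
  have hlt : u < t i.succ := lt_of_not_ge fun h =>
    (le_cellIndex h).not_gt (hi ▸ Fin.castSucc_lt_succ)
  rw [← hi] at hle ⊢
  exact hstep i u ⟨hle, hlt⟩

lemma runSup_eq_partialSups (ht : Monotone t) (h0 : t 0 = 0)
    (hstep : ∀ i : Fin n, ∀ s ∈ Ico (t i.castSucc) (t i.succ), y s = y (t i.castSucc))
    (hu : u ∈ Icc 0 (t (Fin.last n))) : runSup y u = partialSups (y ∘ t) (cellIndex t u) := by
  have himage : y '' Icc 0 u = (y ∘ t) '' Iic (cellIndex t u) := by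
    ext v
    constructor
    · rintro ⟨s, hs, rfl⟩
      exact ⟨cellIndex t s, cellIndex_mono hs.2,
        (eq_apply_cellIndex hstep ⟨h0 ▸ hs.1, hs.2.trans hu.2⟩).symm⟩
    · rintro ⟨i, hi, rfl⟩
      exact ⟨t i, ⟨h0 ▸ ht (Fin.zero_le i), (ht hi).trans (apply_cellIndex_le (h0 ▸ hu.1))⟩, rfl⟩
  rw [runSup, himage, partialSups_apply, Finset.sup'_eq_csSup_image, Finset.coe_Iic]

end StepFunction

theorem vpvar_runMax_sub_le_of_step (T p : ℝ) (hp : 1 ≤ p)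
    (n : ℕ) (t : Fin (n + 1) → ℝ)
    (hmono : StrictMono t) (h0 : t 0 = 0) (hT : t (Fin.last n) = T)
    (y1 y2 : ℝ → ℝ)
    (hstep1 : ∀ i : Fin n, ∀ s ∈ Ico (t i.castSucc) (t i.succ), y1 s = y1 (t i.castSucc))
    (hstep2 : ∀ i : Fin n, ∀ s ∈ Ico (t i.castSucc) (t i.succ), y2 s = y2 (t i.castSucc)) :
    vpvar p (fun u => runSup y1 u - runSup y2 u) 0 T ≤
      vpvar p (fun u => y1 u - y2 u) 0 T := by
  subst hT
  have hmem : ∀ i, t i ∈ Icc 0 (t (Fin.last n)) := fun i =>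
    ⟨h0 ▸ hmono.monotone (Fin.zero_le i), hmono.monotone (Fin.le_last i)⟩
  have hval : EqOn (fun u => y1 u - y2 u) ((fun i => y1 (t i) - y2 (t i)) ∘ cellIndex t)
      (Icc 0 (t (Fin.last n))) := fun u hu => by
    have hu' : u ∈ Icc (t 0) (t (Fin.last n)) := h0 ▸ hu
    simp only [comp_apply, ← eq_apply_cellIndex hstep1 hu', ← eq_apply_cellIndex hstep2 hu']
  have hrun : EqOn (fun u => runSup y1 u - runSup y2 u)
      ((fun i => partialSups (y1 ∘ t) i - partialSups (y2 ∘ t) i) ∘ cellIndex t)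
      (Icc 0 (t (Fin.last n))) := fun u hu => by
    simp only [comp_apply, runSup_eq_partialSups hmono.monotone h0 hstep1 hu,
      runSup_eq_partialSups hmono.monotone h0 hstep2 hu]
  refine vpvar_le_vpvar_of_forall_exists (hmem (Fin.last n)).1
    (bddAbove_varSums_of_eqOn_comp (by linarith) cellIndex_mono hval) fun l hl hlab => ?_
  obtain ⟨K, hK, hle⟩ := exists_listVarSum_partialSups_sub_le (y1 ∘ t) (y2 ∘ t) hp
    ((List.isChain_map _).2 (hl.imp fun _ _ h => cellIndex_mono (t := t) h))
  refine ⟨K.map t, (List.isChain_map _).2 (hK.imp fun _ _ h => hmono.monotone h),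
    by simpa using fun i _ => hmem i, ?_⟩
  rw [listVarSum_congr fun s hs => hrun (hlab s hs), ← listVarSum_map, listVarSum_map _ t K]
  exact hle
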